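/- arXiv:1406.1489 — 3 statements merged into one kernel-verified Lean document; each statement's English description precedes it below -/
import Mathlib

section
/- Consider the decomposed singular system consisting of the forward subsystem Y^p_{k+1} = J Y^p_k + B_p V_k (state dimension p) and the backward subsystem H Y^q_{k+1} = Y^q_k + B_q V_k (state dimension q, H nilpotent with index q*), both driven by the same input V_k ∈ F^m. Then the set of states (Y^p_k, Y^q_k) ∈ F^p × F^q reachable from zero initial condition Y^p_0 = 0 equals the direct sum S_p(J, B_p) ⊕ S_{q*}(H, B_q), where S_p(J,B_p) = span of columns of [B_p, J B_p, ..., J^{p-1} B_p] embedded in the first component and S_{q*}(H,B_q) = span of columns of [B_q, H B_q, ..., H^{q*-1} B_q] embedded in the second component. -/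
/-!
By Cayley–Hamilton every `J ^ n * B_p` has its columns in `S_p(J, B_p)`, so the forward
response `∑ J ^ (k-1-i) B_p V_i` lies there for every `k`; the backward response lies in
`S_{q*}(H, B_q)` term by term. Conversely the two components read disjoint time windows
of the input at `k = p`: the inputs `V_0, …, V_{p-1}` alone determine `Y^p_p` and the inputs
from time `p` on alone determine `Y^q_p`, so both components can be prescribed independently.
-/

open Matrix Finset

/-- The column span of the Krylov block matrix `[B, JB, ..., J^{k-1}B]`. -/
def krylovSpan {F : Type*} [Field F] {p m : ℕ}
    (J : Matrix (Fin p) (Fin p) F) (B : Matrix (Fin p) (Fin m) F) (k : ℕ) :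
    Submodule F (Fin p → F) :=
  Submodule.span F {w | ∃ i < k, ∃ j : Fin m, w = (J ^ i * B) *ᵥ Pi.single j 1}

open Polynomial

theorem Matrix.exists_pow_eq_sum_range_smul_pow {R n : Type*} [CommRing R] [Nontrivial R]
    [Fintype n] [DecidableEq n] (M : Matrix n n R) (k : ℕ) :
    ∃ c : ℕ → R, M ^ k = ∑ i ∈ range (Fintype.card n), c i • M ^ i := by
  rcases isEmpty_or_nonempty n with _ | _
  · exact ⟨0, Subsingleton.elim _ _⟩
  refine ⟨(X ^ k %ₘ M.charpoly).coeff, ?_⟩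
  rw [M.pow_eq_aeval_mod_charpoly]
  refine aeval_eq_sum_range' ?_ M
  by_cases h0 : X ^ k %ₘ M.charpoly = 0
  · simpa [h0] using Fintype.card_pos
  · rw [← M.charpoly_natDegree_eq_dim]
    exact natDegree_lt_natDegree h0 (degree_modByMonic_lt _ M.charpoly_monic)

section krylovSpan

variable {F : Type*} [Field F] {p m : ℕ}
  (J : Matrix (Fin p) (Fin p) F) (B : Matrix (Fin p) (Fin m) F)

theorem mulVec_mem_krylovSpan_of_lt {i k : ℕ} (hi : i < k) (v : Fin m → F) :
    (J ^ i * B) *ᵥ v ∈ krylovSpan J B k := by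
  have : LinearMap.range (J ^ i * B).mulVecLin ≤ krylovSpan J B k := by
    rw [range_mulVecLin]
    refine Submodule.span_mono ?_
    rintro _ ⟨j, rfl⟩
    exact ⟨i, hi, j, (mulVec_single_one _ _).symm⟩
  exact this ⟨v, rfl⟩

theorem mem_krylovSpan_iff {k : ℕ} {x : Fin p → F} :
    x ∈ krylovSpan J B k ↔
      ∃ u : ℕ → Fin m → F, ∑ i ∈ range k, (J ^ i * B) *ᵥ u i = x := by
  constructor
  · intro hx
    let L : (ℕ → Fin m → F) →ₗ[F] (Fin p → F) :=
      ∑ i ∈ range k, (J ^ i * B).mulVecLin ∘ₗ LinearMap.proj i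
    have hL (u : ℕ → Fin m → F) : L u = ∑ i ∈ range k, (J ^ i * B) *ᵥ u i := by
      simp [L]
    suffices krylovSpan J B k ≤ LinearMap.range L by
      obtain ⟨u, rfl⟩ := this hx
      exact ⟨u, (hL u).symm⟩
    refine Submodule.span_le.mpr ?_
    rintro _ ⟨i, hi, j, rfl⟩
    refine ⟨Pi.single i (Pi.single j 1), ?_⟩
    rw [hL, sum_eq_single_of_mem i (mem_range.mpr hi), Pi.single_eq_same]
    intro i' _ hi'
    rw [Pi.single_eq_of_ne hi', mulVec_zero]
  · rintro ⟨u, rfl⟩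
    exact Submodule.sum_mem _ fun i hi => mulVec_mem_krylovSpan_of_lt J B (mem_range.mp hi) (u i)

theorem pow_mul_mulVec_mem_krylovSpan_dim (n : ℕ) (v : Fin m → F) :
    (J ^ n * B) *ᵥ v ∈ krylovSpan J B p := by
  obtain ⟨c, hc⟩ := J.exists_pow_eq_sum_range_smul_pow n
  rw [Fintype.card_fin] at hc
  rw [hc, Matrix.sum_mul, sum_mulVec]
  refine Submodule.sum_mem _ fun i hi => ?_
  rw [smul_mul, smul_mulVec]
  exact Submodule.smul_mem _ _ (mulVec_mem_krylovSpan_of_lt J B (mem_range.mp hi) v)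

end krylovSpan

theorem reachable_set_decomposed_general {F : Type*} [Field F] {p q m : ℕ}
    (J : Matrix (Fin p) (Fin p) F) (H : Matrix (Fin q) (Fin q) F)
    (Bp : Matrix (Fin p) (Fin m) F) (Bq : Matrix (Fin q) (Fin m) F)
    (qs : ℕ) :
    {W : (Fin p → F) × (Fin q → F) | ∃ k : ℕ, ∃ V : ℕ → Fin m → F,
        (∑ i ∈ Finset.range k, (J ^ (k - 1 - i)) *ᵥ (Bp *ᵥ V i),
          -∑ i ∈ Finset.range qs, (H ^ i) *ᵥ (Bq *ᵥ V (k + i))) = W}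
      = {W : (Fin p → F) × (Fin q → F) |
          W.1 ∈ krylovSpan J Bp p ∧ W.2 ∈ krylovSpan H Bq qs} := by
  ext ⟨x, y⟩
  simp only [Set.mem_ofPred_eq, Prod.mk.injEq]
  constructor
  · rintro ⟨k, V, rfl, rfl⟩
    refine ⟨Submodule.sum_mem _ fun i _ => ?_,
      Submodule.neg_mem _ (Submodule.sum_mem _ fun i hi => ?_)⟩
    · rw [mulVec_mulVec]
      exact pow_mul_mulVec_mem_krylovSpan_dim J Bp _ _
    · rw [mulVec_mulVec]
      exact mulVec_mem_krylovSpan_of_lt H Bq (mem_range.mp hi) _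
  · rintro ⟨h1, h2⟩
    obtain ⟨u, rfl⟩ := (mem_krylovSpan_iff J Bp).mp h1
    obtain ⟨w, rfl⟩ := (mem_krylovSpan_iff H Bq).mp h2
    refine ⟨p, fun i => if i < p then u (p - 1 - i) else -w (i - p), ?_, ?_⟩
    · rw [← sum_range_reflect (fun i => (J ^ i * Bp) *ᵥ u i) p]
      refine sum_congr rfl fun i hi => ?_
      simp only [if_pos (mem_range.mp hi), mulVec_mulVec]
    · rw [neg_eq_iff_eq_neg, ← sum_neg_distrib]
      refine sum_congr rfl fun i _ => ?_
      simp only [if_neg (Nat.not_lt.mpr (Nat.le_add_right p i)), Nat.add_sub_cancel_left,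
        mulVec_mulVec, mulVec_neg]

/-- Reachability theorem for the decomposed singular system: the set of states
`(Y^p_k, Y^q_k)` reachable from zero initial condition equals the direct sum
`S_p(J, B_p) ⊕ S_{q*}(H, B_q)`. -/
theorem reachable_set_decomposed {F : Type*} [Field F] {p q m : ℕ}
    (J : Matrix (Fin p) (Fin p) F) (H : Matrix (Fin q) (Fin q) F)
    (Bp : Matrix (Fin p) (Fin m) F) (Bq : Matrix (Fin q) (Fin m) F)
    (qs : ℕ) (hH : H ^ qs = 0) (hH' : H ^ (qs - 1) ≠ 0) :
    {W : (Fin p → F) × (Fin q → F) | ∃ k : ℕ, ∃ V : ℕ → Fin m → F,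
        (∑ i ∈ Finset.range k, (J ^ (k - 1 - i)) *ᵥ (Bp *ᵥ V i),
          -∑ i ∈ Finset.range qs, (H ^ i) *ᵥ (Bq *ᵥ V (k + i))) = W}
      = {W : (Fin p → F) × (Fin q → F) |
          W.1 ∈ krylovSpan J Bp p ∧ W.2 ∈ krylovSpan H Bq qs} :=
  reachable_set_decomposed_general J H Bp Bq qs
end

section
/- One inclusion of the reachability theorem: for the decomposed system with forward part Y^p_{k+1} = J Y^p_k + B_p V_k starting at 0 and backward part Y^q_k = -∑_{i=0}^{q*-1} H^i B_q V_{k+i}, every state (Y^p_k, Y^q_k) attained at any time k ≥ 0 lies in S_p(J,B_p) × S_{q*}(H,B_q). -/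
open Matrix Finset

lemma finset_sum_mulVec {F : Type*} [Field F] {a b : ℕ} {ι : Type*}
    (s : Finset ι) (f : ι → Matrix (Fin a) (Fin b) F) (x : Fin b → F) :
    (∑ i ∈ s, f i) *ᵥ x = ∑ i ∈ s, f i *ᵥ x := by
  induction s using Finset.cons_induction with
  | empty => simp [Matrix.zero_mulVec]
  | cons a s ha ih => simp [Finset.sum_cons, Matrix.add_mulVec, ih]

lemma krylov_gen_mem {F : Type*} [Field F] {p m : ℕ}
    (J : Matrix (Fin p) (Fin p) F) (B : Matrix (Fin p) (Fin m) F) {k i : ℕ}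
    (hi : i < k) (v : Fin m → F) : (J ^ i * B) *ᵥ v ∈ krylovSpan J B k := by
  have hv : (J ^ i * B) *ᵥ v = ∑ j : Fin m, v j • ((J ^ i * B) *ᵥ Pi.single j 1) := by
    conv_lhs => rw [pi_eq_sum_univ v]
    ext r
    simp [Matrix.mulVec, dotProduct, Pi.single_apply, Finset.mul_sum, mul_comm]
  rw [hv]
  exact Submodule.sum_mem _ fun j _ => Submodule.smul_mem _ _
    (Submodule.subset_span ⟨i, hi, j, rfl⟩)

lemma krylov_pow_mulVec_mem {F : Type*} [Field F] {p m : ℕ}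
    (J : Matrix (Fin p) (Fin p) F) (B : Matrix (Fin p) (Fin m) F)
    (n : ℕ) (v : Fin m → F) : (J ^ n) *ᵥ (B *ᵥ v) ∈ krylovSpan J B p := by
  rcases Nat.eq_zero_or_pos p with hp | hp
  · subst hp
    have h0 : (J ^ n) *ᵥ (B *ᵥ v) = 0 := Subsingleton.elim _ _
    rw [h0]; exact zero_mem _
  -- Cayley–Hamilton : J ^ p = - ∑ i < p, coeff i • J ^ i
  have hdeg : J.charpoly.natDegree = p := by
    rw [Matrix.charpoly_natDegree_eq_dim, Fintype.card_fin]
  have hc := J.charpoly_monic.coeff_natDegree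
  rw [hdeg] at hc
  have h0 := J.aeval_self_charpoly
  rw [Polynomial.aeval_eq_sum_range, hdeg, Finset.sum_range_succ, hc, one_smul] at h0
  have hCH : J ^ p = -∑ i ∈ Finset.range p, J.charpoly.coeff i • J ^ i :=
    eq_neg_of_add_eq_zero_right h0
  induction n using Nat.strong_induction_on with
  | _ n ih =>
    rcases lt_or_ge n p with h | h
    · rw [Matrix.mulVec_mulVec]; exact krylov_gen_mem J B h v
    · have hn : J ^ n = -∑ i ∈ Finset.range p,
          J.charpoly.coeff i • J ^ (n - p + i) := by
        have h1 : J ^ n = J ^ (n - p) * J ^ p := by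
          rw [← pow_add, Nat.sub_add_cancel h]
        rw [h1, hCH, Matrix.mul_neg, Finset.mul_sum]
        congr 1
        refine Finset.sum_congr rfl fun i _ => ?_
        rw [Matrix.mul_smul, ← pow_add]
      rw [hn, Matrix.neg_mulVec, finset_sum_mulVec]
      refine neg_mem (Submodule.sum_mem _ fun i hi => ?_)
      rw [Matrix.smul_mulVec]
      refine Submodule.smul_mem _ _ (ih (n - p + i) ?_)
      have := Finset.mem_range.mp hi
      omega

/-- One inclusion of the reachability theorem: every state `(Y^p_k, Y^q_k)` of
the decomposed system attained at any time `k` lies in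
`S_p(J,B_p) × S_{q*}(H,B_q)`. -/
theorem reachable_subset_krylov {F : Type*} [Field F] {p q m : ℕ}
    (J : Matrix (Fin p) (Fin p) F) (H : Matrix (Fin q) (Fin q) F)
    (Bp : Matrix (Fin p) (Fin m) F) (Bq : Matrix (Fin q) (Fin m) F)
    (qs : ℕ) (hH : H ^ qs = 0)
    (k : ℕ) (V : ℕ → Fin m → F) :
    (∑ i ∈ Finset.range k, (J ^ (k - 1 - i)) *ᵥ (Bp *ᵥ V i)) ∈ krylovSpan J Bp p
      ∧ (-∑ i ∈ Finset.range qs, (H ^ i) *ᵥ (Bq *ᵥ V (k + i))) ∈ krylovSpan H Bq qs := by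
  constructor
  · exact Submodule.sum_mem _ fun i _ => krylov_pow_mulVec_mem J Bp _ _
  · refine neg_mem (Submodule.sum_mem _ fun i hi => ?_)
    rw [Matrix.mulVec_mulVec]
    exact krylov_gen_mem H Bq (Finset.mem_range.mp hi) _
end

section
/- Let H be a q×q matrix with H^{q*} = 0 and let Y satisfy H Y_{k+1} = Y_k + B V_k for 0 ≤ k ≤ M-1. Then for every k with 0 ≤ k ≤ M - q*, the state Y_k = -∑_{i=0}^{q*-1} H^i B V_{k+i} depends only on the inputs V_k, ..., V_{k+q*-1} and not on the terminal condition Y_M. -/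
open Matrix Finset

private lemma mulVec_sum' {F : Type*} [Field F] {q m : ℕ} (A : Matrix (Fin q) (Fin q) F)
    {s : Finset ℕ} (f : ℕ → Fin q → F) :
    A *ᵥ (∑ i ∈ s, f i) = ∑ i ∈ s, A *ᵥ f i :=
  map_sum (Matrix.mulVecLin A) f s

/-- If `H^{q*} = 0` and `H Y_{k+1} = Y_k + B V_k` for `0 ≤ k ≤ M-1`, then for
`0 ≤ k ≤ M - q*` the state `Y_k = -∑_{i<q*} H^i B V_{k+i}` depends only on the
inputs `V_k, ..., V_{k+q*-1}` and not on the terminal condition `Y_M`. -/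
theorem state_independent_of_terminal {F : Type*} [Field F] {q m : ℕ}
    (H : Matrix (Fin q) (Fin q) F) (B : Matrix (Fin q) (Fin m) F)
    (qs M : ℕ) (hH : H ^ qs = 0) (hqM : qs ≤ M)
    (V : ℕ → Fin m → F) (Y : ℕ → Fin q → F)
    (hY : ∀ k < M, H *ᵥ Y (k + 1) = Y k + B *ᵥ V k) :
    ∀ k, k + qs ≤ M → Y k = -∑ i ∈ Finset.range qs, (H ^ i) *ᵥ (B *ᵥ V (k + i)) := by
  have key : ∀ n k, k + n ≤ M →
      Y k = (H ^ n) *ᵥ Y (k + n) - ∑ i ∈ Finset.range n, (H ^ i) *ᵥ (B *ᵥ V (k + i)) := by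
    intro n
    induction n with
    | zero => intro k _; simp
    | succ n ih =>
      intro k hk
      have hkM : k < M := by omega
      have h1 := hY k hkM
      have h2 := ih (k + 1) (by omega)
      have : Y k = H *ᵥ Y (k + 1) - B *ᵥ V k := by
        rw [h1]; abel
      rw [this, h2, Matrix.mulVec_sub, Matrix.mulVec_mulVec,
        ← pow_succ' H n]
      have harr : k + 1 + n = k + (n + 1) := by omega
      rw [harr, Finset.sum_range_succ', mulVec_sum']
      simp only [Matrix.mulVec_mulVec, ← pow_succ']
      have : ∀ i, k + 1 + i = k + (i + 1) := fun i => by omega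
      have hmul : ∀ x : ℕ, H * (H ^ x * B) = H ^ (x + 1) * B := fun x => by
        rw [pow_succ', Matrix.mul_assoc]
      simp only [this, hmul, pow_zero, Matrix.one_mul, Nat.add_zero]
      abel
      all_goals exact 0
  intro k hk
  have := key qs k hk
  rw [this, hH]
  simp
end
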